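/- Let C = ⟨(b|0), (ℓ | fh + 2f)⟩ ⊆ R_{α,β} be a Z_2Z_4-additive cyclic code with fhg = x^β - 1, β odd. Then the set S_1 ∪ S_2 ∪ S_3, where S_1 = {x^i⋆(b|0) : 0 ≤ i ≤ α - deg b - 1}, S_2 = {x^i⋆(ℓ | fh+2f) : 0 ≤ i ≤ deg g - 1}, S_3 = {x^i⋆(ℓg | 2fg) : 0 ≤ i ≤ deg h - 1}, spans C as a Z_4-module, and |C| = 2^{α - deg b} · 4^{deg g} · 2^{deg h}. -/

import Mathlib

open Polynomial

/-- Reduction modulo 2, `Z₄[x] → Z₂[x]`. -/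
noncomputable def red42 : Polynomial (ZMod 4) →+* Polynomial (ZMod 2) :=
  Polynomial.mapRingHom (ZMod.castHom (show 2 ∣ 4 by norm_num) (ZMod 2))

/-- The polynomial `∑ uᵢ xⁱ` associated to a binary vector. -/
noncomputable def polyOf2 {α : ℕ} (u : Fin α → ZMod 2) : Polynomial (ZMod 2) :=
  ∑ i, C (u i) * X ^ (i : ℕ)

/-- The polynomial `∑ u'ⱼ xʲ` associated to a quaternary vector. -/
noncomputable def polyOf4 {β : ℕ} (u : Fin β → ZMod 4) : Polynomial (ZMod 4) :=
  ∑ j, C (u j) * X ^ (j : ℕ)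

/-- Membership in the `Z₂Z₄`-additive cyclic code `C = ⟨(b|0), (ℓ|fh+2f)⟩`,
the `Z₄[x]`-submodule of `Z₂[x]/(x^α-1) × Z₄[x]/(x^β-1)` generated by `(b|0)`
and `(ℓ | fh+2f)`, expressed on vectors via their associated polynomials. -/
def memC {α β : ℕ} (b ℓ : Polynomial (ZMod 2)) (q : Polynomial (ZMod 4))
    (z : (Fin α → ZMod 2) × (Fin β → ZMod 4)) : Prop :=
  ∃ lam mu : Polynomial (ZMod 4),
    (X ^ α - 1 : Polynomial (ZMod 2)) ∣
        polyOf2 z.1 - (red42 lam * b + red42 mu * ℓ) ∧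
    (X ^ β - 1 : Polynomial (ZMod 4)) ∣ polyOf4 z.2 - mu * q

/-!
Every codeword `λ⋆(b|0) + μ⋆(ℓ|fh+2f)` can be rewritten as `A⋆(b|0) + c⋆(ℓ|fh+2f) + e⋆(ℓg|2fg)`
with `deg A < α - deg b`, `deg c < deg g` and `deg e < deg h`, by dividing `μ` by `g` and the
quotient by `h`. This reduced form is unique up to `A` and `e` modulo 2: if it represents `0`,
cancelling `f` from the quaternary part gives `ch + 2c + 2eg = hgm`, and reducing modulo 2 twice,
using that `h` and `g` are coprime modulo 2 (`x^β - 1` is separable over `Z₂` since `β` is odd),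
forces `c = 0` and `e ≡ 0`; then `x^α - 1 ∣ A b` forces `A = 0`. Hence `C` is in bijection with
`Z₂^(α - deg b) × Z₄^(deg g) × Z₂^(deg h)`.
-/

namespace Polynomial

variable {R : Type*} [CommRing R]

theorem monic_X_pow_sub_one {n : ℕ} (hn : n ≠ 0) : (X ^ n - 1 : R[X]).Monic := by
  simpa using monic_X_pow_sub_C (1 : R) hn

theorem degree_X_pow_sub_one [Nontrivial R] {n : ℕ} (hn : 0 < n) :
    (X ^ n - 1 : R[X]).degree = n := by
  simpa using degree_X_pow_sub_C hn (1 : R)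

theorem eq_zero_and_eq_zero_of_mul_eq [IsDomain R] {P G H M : R[X]} (hH : H ≠ 0)
    (hP : P.degree < G.degree) (heq : P * H = H * G * M) : P = 0 ∧ M = 0 := by
  have hPGM : P = G * M := mul_right_cancel₀ hH (by rw [heq]; ring)
  have hP0 : P = 0 := eq_zero_of_dvd_of_degree_lt ⟨M, hPGM⟩ hP
  have hG0 : G ≠ 0 := by rintro rfl; simp at hP
  exact ⟨hP0, (mul_eq_zero.1 (hPGM ▸ hP0)).resolve_left hG0⟩

variable [DecidableEq R]

theorem sum_C_mul_X_pow_eq_ofFn {n : ℕ} (v : Fin n → R) :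
    ∑ i : Fin n, C (v i) * X ^ (i : ℕ) = ofFn n v := by
  simp only [ofFn_eq_sum_monomial, C_mul_X_pow_eq_monomial]

theorem ofFn_toFn_of_degree_lt {n : ℕ} {p : R[X]} (hp : p.degree < n) :
    ofFn n (toFn n p) = p := by
  ext i
  by_cases hi : i < n
  · simp [hi, toFn]
  · rw [ofFn_coeff_eq_zero_of_ge _ (not_lt.1 hi),
      coeff_eq_zero_of_degree_lt (hp.trans_le (by exact_mod_cast not_lt.1 hi))]

section Residue

variable [Nontrivial R] {M : R[X]} {n : ℕ}

theorem toFn_modByMonic_eq_iff (hM : M.Monic) (hn : M.degree = n) {p q : R[X]} :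
    toFn n (p %ₘ M) = toFn n (q %ₘ M) ↔ M ∣ p - q := by
  rw [← modByMonic_eq_zero_iff_dvd hM, sub_modByMonic, sub_eq_zero]
  refine ⟨fun h ↦ ?_, congrArg _⟩
  have hp := ofFn_toFn_of_degree_lt (hn ▸ degree_modByMonic_lt p hM)
  have hq := ofFn_toFn_of_degree_lt (hn ▸ degree_modByMonic_lt q hM)
  rw [← hp, ← hq, h]

theorem dvd_ofFn_sub_iff (hM : M.Monic) (hn : M.degree = n) (v : Fin n → R) (p : R[X]) :
    M ∣ ofFn n v - p ↔ v = toFn n (p %ₘ M) := by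
  rw [← toFn_modByMonic_eq_iff hM hn,
    (modByMonic_eq_self_iff hM).2 (hn ▸ ofFn_degree_lt v), toFn_comp_ofFn_eq_id]

end Residue

end Polynomial

theorem Nat.card_range_eq_of_fibers {α β γ : Type*} {f : α → β} {g : α → γ}
    (hg : Function.Surjective g) (hfg : ∀ x y, f x = f y ↔ g x = g y) :
    Nat.card (Set.range f) = Nat.card γ :=
  Nat.card_congr <| (Setoid.quotientKerEquivRange f).symm.trans <|
    (Quotient.congrRight hfg).trans (Setoid.quotientKerEquivOfSurjective g hg)

noncomputable abbrev red2 : ZMod 4 →+* ZMod 2 := ZMod.castHom (show 2 ∣ 4 by norm_num) (ZMod 2)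

theorem two_mul_eq_zero_iff_red2 (x : ZMod 4) : 2 * x = 0 ↔ red2 x = 0 := by
  revert x; decide

theorem red2_eq_zero_iff_two_dvd (x : ZMod 4) : red2 x = 0 ↔ 2 ∣ x := by
  revert x; decide

theorem monic_of_ne_zero_zmod2 {p : (ZMod 2)[X]} (hp : p ≠ 0) : p.Monic := by
  have : ∀ x : ZMod 2, x ≠ 0 → x = 1 := by decide
  exact this _ (leadingCoeff_ne_zero.2 hp)

theorem red42_coeff (p : (ZMod 4)[X]) (n : ℕ) : (red42 p).coeff n = red2 (p.coeff n) :=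
  coeff_map _ _

theorem degree_red42_le (p : (ZMod 4)[X]) : (red42 p).degree ≤ p.degree :=
  degree_map_le

theorem red42_ofFn {n : ℕ} (v : Fin n → ZMod 4) : red42 (ofFn n v) = ofFn n (red2 ∘ v) := by
  simp [red42, ofFn_eq_sum_monomial]

theorem red42_X_pow_sub_one (n : ℕ) : red42 (X ^ n - 1) = X ^ n - 1 := by
  simp [red42]

theorem red42_two : red42 2 = 0 := by
  rw [map_ofNat]; exact CharTwo.two_eq_zero

theorem two_mul_eq_zero_iff_red42 {p : (ZMod 4)[X]} : 2 * p = 0 ↔ red42 p = 0 := by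
  simp only [Polynomial.ext_iff, red42_coeff, coeff_zero, coeff_ofNat_mul,
    two_mul_eq_zero_iff_red2]

theorem red42_eq_zero_iff_two_dvd {p : (ZMod 4)[X]} : red42 p = 0 ↔ 2 ∣ p := by
  rw [← C_ofNat, ← Ideal.mem_span_singleton, ← Set.image_singleton, ← Ideal.map_span,
    Ideal.mem_map_C_iff, Polynomial.ext_iff]
  simp only [red42_coeff, coeff_zero, Ideal.mem_span_singleton, red2_eq_zero_iff_two_dvd]

theorem degree_red42_le_degree_two_mul (p : (ZMod 4)[X]) :
    (red42 p).degree ≤ (2 * p).degree := by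
  rw [degree_le_iff_coeff_zero]
  intro m hm
  rw [red42_coeff, ← two_mul_eq_zero_iff_red2, ← coeff_ofNat_mul]
  exact coeff_eq_zero_of_degree_lt hm

theorem exists_monic_cofactor {α : ℕ} (hα : 0 < α) {b : (ZMod 2)[X]} (hb : b ∣ X ^ α - 1) :
    ∃ B : (ZMod 2)[X], B.Monic ∧ X ^ α - 1 = b * B ∧ B.natDegree = α - b.natDegree := by
  obtain ⟨B, hbB⟩ := hb
  have hprod : b * B ≠ 0 := hbB ▸ (monic_X_pow_sub_one hα.ne').ne_zero
  have hdeg := natDegree_mul (left_ne_zero_of_mul hprod) (right_ne_zero_of_mul hprod)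
  rw [← hbB, natDegree_eq_of_degree_eq_some (degree_X_pow_sub_one hα)] at hdeg
  exact ⟨B, monic_of_ne_zero_zmod2 (right_ne_zero_of_mul hprod), hbB, by omega⟩

theorem isCoprime_red42 {β : ℕ} (hβ : Odd β) {f g h : (ZMod 4)[X]}
    (hfac : f * h * g = X ^ β - 1) : IsCoprime (red42 h) (red42 g) := by
  have hβ2 : (β : ZMod 2) ≠ 0 := by
    rw [(ZMod.natCast_eq_one_iff_odd).2 hβ]; exact one_ne_zero
  have hsep : (X ^ β - 1 : (ZMod 2)[X]).Separable := by
    simpa using separable_X_pow_sub_C (1 : ZMod 2) hβ2 one_ne_zero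
  rw [← red42_X_pow_sub_one, ← hfac, mul_assoc, map_mul, map_mul] at hsep
  exact hsep.of_mul_right.isCoprime

theorem eq_zero_of_mul_add_two_mul_eq {c e g h m : (ZMod 4)[X]} (hg : g.Monic) (hh : h.Monic)
    (hcop : IsCoprime (red42 h) (red42 g)) (hc : c.degree < g.degree) (he : e.degree < h.degree)
    (heq : c * h + 2 * c + 2 * e * g = h * g * m) : c = 0 ∧ red42 e = 0 := by
  have hrh : red42 h ≠ 0 := (hh.map _).ne_zero
  have hcg : c.degree < (red42 g).degree := hc.trans_eq (hg.degree_map _).symm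
  -- Modulo 2, `heq` reads `c h = h g m`: so `c = 2 c'` and `m = 2 m'`, and halving `heq`
  -- gives `c' h + e g = h g m'` modulo 2.
  obtain ⟨hc0, hm0⟩ := eq_zero_and_eq_zero_of_mul_eq hrh ((degree_red42_le c).trans_lt hcg)
    (by simpa [red42_two] using congrArg red42 heq)
  obtain ⟨c', rfl⟩ := red42_eq_zero_iff_two_dvd.1 hc0
  obtain ⟨m', rfl⟩ := red42_eq_zero_iff_two_dvd.1 hm0
  have h4 : (4 : (ZMod 4)[X]) = 0 := by simpa using CharP.cast_eq_zero (ZMod 4)[X] 4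
  have heq' : red42 c' * red42 h + red42 e * red42 g = red42 h * red42 g * red42 m' := by
    have h2 : 2 * (c' * h + e * g - h * g * m') = 0 := by linear_combination heq - c' * h4
    simpa [sub_eq_zero] using two_mul_eq_zero_iff_red42.1 h2
  have he0 : red42 e = 0 :=
    eq_zero_of_dvd_of_degree_lt (hcop.dvd_of_dvd_mul_right
        ⟨red42 g * red42 m' - red42 c', by linear_combination heq'⟩)
      ((degree_red42_le e).trans_lt (he.trans_eq (hh.degree_map _).symm))
  obtain ⟨hc'0, -⟩ := eq_zero_and_eq_zero_of_mul_eq hrh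
    ((degree_red42_le_degree_two_mul c').trans_lt hcg) (by rwa [he0, zero_mul, add_zero] at heq')
  exact ⟨two_mul_eq_zero_iff_red42.2 hc'0, he0⟩

/-- The two components of `A⋆(b|0) + c⋆(ℓ|fh+2f) + e⋆(ℓg|2fg)`; `A` is binary because only its
reduction modulo 2 acts on `(b|0)`. -/
noncomputable def spanBin (b ℓ : (ZMod 2)[X]) (g : (ZMod 4)[X]) (A : (ZMod 2)[X])
    (c e : (ZMod 4)[X]) : (ZMod 2)[X] :=
  A * b + red42 c * ℓ + red42 e * (ℓ * red42 g)

noncomputable def spanQuat (f g h c e : (ZMod 4)[X]) : (ZMod 4)[X] :=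
  c * (f * h + 2 * f) + e * (2 * f * g)

abbrev SpanCoeffs (α : ℕ) (b : (ZMod 2)[X]) (g h : (ZMod 4)[X]) : Type :=
  (Fin (α - b.natDegree) → ZMod 4) × (Fin g.natDegree → ZMod 4) × (Fin h.natDegree → ZMod 4)

noncomputable def spanVec (α β : ℕ) (b ℓ : (ZMod 2)[X]) (f g h : (ZMod 4)[X])
    (d : SpanCoeffs α b g h) : (Fin α → ZMod 2) × (Fin β → ZMod 4) :=
  (toFn α (spanBin b ℓ g (red42 (ofFn _ d.1)) (ofFn _ d.2.1) (ofFn _ d.2.2) %ₘ (X ^ α - 1)),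
   toFn β (spanQuat f g h (ofFn _ d.2.1) (ofFn _ d.2.2) %ₘ (X ^ β - 1)))

noncomputable def reduceSpanCoeffs {α : ℕ} {b : (ZMod 2)[X]} {g h : (ZMod 4)[X]}
    (d : SpanCoeffs α b g h) :
    (Fin (α - b.natDegree) → ZMod 2) × (Fin g.natDegree → ZMod 4) × (Fin h.natDegree → ZMod 2) :=
  (red2 ∘ d.1, d.2.1, red2 ∘ d.2.2)

section Code

variable {α β : ℕ} {f g h : (ZMod 4)[X]} {b ℓ : (ZMod 2)[X]}

theorem spanBin_sub (A A' : (ZMod 2)[X]) (c c' e e' : (ZMod 4)[X]) :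
    spanBin b ℓ g A c e - spanBin b ℓ g A' c' e' = spanBin b ℓ g (A - A') (c - c') (e - e') := by
  simp only [spanBin, map_sub]; ring

theorem spanQuat_sub (c c' e e' : (ZMod 4)[X]) :
    spanQuat f g h c e - spanQuat f g h c' e' = spanQuat f g h (c - c') (e - e') := by
  simp only [spanQuat]; ring

theorem reduceSpanCoeffs_surjective :
    Function.Surjective (reduceSpanCoeffs (α := α) (b := b) (g := g) (h := h)) :=
  (ZMod.ringHom_surjective red2).comp_left.prodMap
    (Function.surjective_id.prodMap (ZMod.ringHom_surjective red2).comp_left)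

theorem dvd_span_iff (hα : 0 < α) (hβ : Odd β) (hf : f.Monic) (hg : g.Monic) (hh : h.Monic)
    (hfac : f * h * g = X ^ β - 1) (hb : b ∣ X ^ α - 1) {A : (ZMod 2)[X]} {c e : (ZMod 4)[X]}
    (hA : A.degree < (α - b.natDegree : ℕ)) (hc : c.degree < g.natDegree)
    (he : e.degree < h.natDegree) :
    (X ^ α - 1 ∣ spanBin b ℓ g A c e ∧ X ^ β - 1 ∣ spanQuat f g h c e) ↔
      A = 0 ∧ c = 0 ∧ red42 e = 0 := by
  have : Nontrivial (ZMod 4) := ZMod.nontrivial_iff.2 (by norm_num)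
  constructor
  · rintro ⟨h2, ⟨m, hm⟩⟩
    unfold spanQuat at hm
    have hcancel : c * h + 2 * c + 2 * e * g = h * g * m := by
      refine sub_eq_zero.1 (hf.mul_right_eq_zero_iff.1 ?_)
      linear_combination hm - m * hfac
    obtain ⟨hc0, he0⟩ := eq_zero_of_mul_add_two_mul_eq hg hh (isCoprime_red42 hβ hfac)
      (hc.trans_eq (degree_eq_natDegree hg.ne_zero).symm)
      (he.trans_eq (degree_eq_natDegree hh.ne_zero).symm) hcancel
    obtain ⟨B, hBm, hbB, hBdeg⟩ := exists_monic_cofactor hα hb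
    obtain ⟨u, hu⟩ := h2
    rw [spanBin, hc0, he0, map_zero, zero_mul, zero_mul, add_zero, add_zero, hbB] at hu
    have hb0 : b ≠ 0 := left_ne_zero_of_mul (hbB ▸ (monic_X_pow_sub_one hα.ne').ne_zero)
    have hAB : A = B * u := mul_right_cancel₀ hb0 (by linear_combination hu)
    refine ⟨eq_zero_of_dvd_of_degree_lt ⟨u, hAB⟩ ?_, hc0, he0⟩
    rwa [degree_eq_natDegree hBm.ne_zero, hBdeg]
  · rintro ⟨rfl, rfl, he0⟩
    have h2e : 2 * e = 0 := two_mul_eq_zero_iff_red42.2 he0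
    refine ⟨⟨0, by simp [spanBin, he0]⟩, ⟨0, ?_⟩⟩
    unfold spanQuat
    linear_combination (f * g) * h2e

theorem exists_reduced_span (hα : 0 < α) (hg : g.Monic) (hh : h.Monic)
    (hfac : f * h * g = X ^ β - 1) (hb : b ∣ X ^ α - 1) (hdvd : b ∣ red42 (h * g) * ℓ)
    (lam mu : (ZMod 4)[X]) :
    ∃ (A : (ZMod 2)[X]) (c e : (ZMod 4)[X]),
      A.degree < (α - b.natDegree : ℕ) ∧ c.degree < g.natDegree ∧ e.degree < h.natDegree ∧
      X ^ α - 1 ∣ red42 lam * b + red42 mu * ℓ - spanBin b ℓ g A c e ∧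
      X ^ β - 1 ∣ mu * (f * h + 2 * f) - spanQuat f g h c e := by
  have : Nontrivial (ZMod 4) := ZMod.nontrivial_iff.2 (by norm_num)
  obtain ⟨B, hBm, hbB, hBdeg⟩ := exists_monic_cofactor hα hb
  obtain ⟨w, hw⟩ := hdvd
  rw [map_mul] at hw
  -- Write `μ = c + g s` and `s = e + h t`. Modulo the code's relations `g s ⋆ (ℓ|fh+2f)` equals
  -- `s ⋆ (ℓg|2fg)`, and `h t ⋆ (ℓg|2fg) = t ⋆ (ℓhg|0) = (t w) ⋆ (b|0)` joins the `(b|0)` part,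
  -- whose coefficient is finally reduced modulo `B = (x^α - 1)/b`.
  set s := mu /ₘ g
  set t := s /ₘ h
  have hmu : mu %ₘ g + g * s = mu := modByMonic_add_div mu g
  have hs : s %ₘ h + h * t = s := modByMonic_add_div s h
  have hmu2 := congrArg red42 hmu
  have hs2 := congrArg red42 hs
  simp only [map_add, map_mul] at hmu2 hs2
  set Λ := red42 lam + red42 t * w with hΛ
  have hΛB : Λ %ₘ B + B * (Λ /ₘ B) = Λ := modByMonic_add_div Λ B
  refine ⟨Λ %ₘ B, mu %ₘ g, s %ₘ h, ?_,
    (degree_modByMonic_lt _ hg).trans_eq (degree_eq_natDegree hg.ne_zero),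
    (degree_modByMonic_lt _ hh).trans_eq (degree_eq_natDegree hh.ne_zero),
    ⟨Λ /ₘ B, ?_⟩, ⟨s + 2 * t, ?_⟩⟩
  · rw [← hBdeg, ← degree_eq_natDegree hBm.ne_zero]
    exact degree_modByMonic_lt _ hBm
  · unfold spanBin
    linear_combination (-ℓ) * hmu2 + (-(ℓ * red42 g)) * hs2 + red42 t * hw - b * hΛB
      - b * hΛ - (Λ /ₘ B) * hbB
  · unfold spanQuat
    linear_combination (-(f * h + 2 * f)) * hmu + (-(2 * f * g)) * hs + (s + 2 * t) * hfac

theorem eq_spanVec_iff (hα : 0 < α) (hβ : 0 < β) (z : (Fin α → ZMod 2) × (Fin β → ZMod 4))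
    (d : SpanCoeffs α b g h) :
    z = spanVec α β b ℓ f g h d ↔
      X ^ α - 1 ∣ ofFn α z.1 - spanBin b ℓ g (red42 (ofFn _ d.1)) (ofFn _ d.2.1) (ofFn _ d.2.2) ∧
      X ^ β - 1 ∣ ofFn β z.2 - spanQuat f g h (ofFn _ d.2.1) (ofFn _ d.2.2) := by
  have : Nontrivial (ZMod 4) := ZMod.nontrivial_iff.2 (by norm_num)
  rw [Prod.ext_iff, dvd_ofFn_sub_iff (monic_X_pow_sub_one hα.ne') (degree_X_pow_sub_one hα),
    dvd_ofFn_sub_iff (monic_X_pow_sub_one hβ.ne') (degree_X_pow_sub_one hβ)]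
  rfl

theorem memC_iff_mem_range_spanVec (hα : 0 < α) (hβ : 0 < β) (hg : g.Monic) (hh : h.Monic)
    (hfac : f * h * g = X ^ β - 1) (hb : b ∣ X ^ α - 1) (hdvd : b ∣ red42 (h * g) * ℓ)
    (z : (Fin α → ZMod 2) × (Fin β → ZMod 4)) :
    memC b ℓ (f * h + 2 * f) z ↔ z ∈ Set.range (spanVec α β b ℓ f g h) := by
  simp only [memC, polyOf2, polyOf4, sum_C_mul_X_pow_eq_ofFn, Set.mem_range, eq_comm (b := z),
    eq_spanVec_iff hα hβ]
  constructor
  · rintro ⟨lam, mu, h2, h4⟩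
    obtain ⟨A, c, e, hA, hc, he, h2', h4'⟩ := exists_reduced_span hα hg hh hfac hb hdvd lam mu
    obtain ⟨a, ha⟩ := (ZMod.ringHom_surjective red2).comp_left (toFn _ A)
    refine ⟨(a, toFn _ c, toFn _ e), ?_, ?_⟩
    · have hA' : red42 (ofFn _ a) = A :=
        (red42_ofFn a).trans ((congrArg (ofFn _) ha).trans (ofFn_toFn_of_degree_lt hA))
      rw [hA', ofFn_toFn_of_degree_lt hc, ofFn_toFn_of_degree_lt he]
      simpa only [sub_add_sub_cancel] using dvd_add h2 h2'
    · rw [ofFn_toFn_of_degree_lt hc, ofFn_toFn_of_degree_lt he]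
      simpa only [sub_add_sub_cancel] using dvd_add h4 h4'
  · rintro ⟨d, h2, h4⟩
    refine ⟨ofFn _ d.1, ofFn _ d.2.1 + ofFn _ d.2.2 * g, ?_, ?_⟩
    · convert h2 using 2
      simp only [spanBin, map_add, map_mul]; ring
    · convert dvd_sub h4 (dvd_mul_left (X ^ β - 1) (ofFn _ d.2.2)) using 1
      rw [← hfac]; unfold spanQuat; ring

theorem spanVec_eq_spanVec_iff (hα : 0 < α) (hβ : Odd β) (hf : f.Monic) (hg : g.Monic)
    (hh : h.Monic) (hfac : f * h * g = X ^ β - 1) (hb : b ∣ X ^ α - 1)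
    (d d' : SpanCoeffs α b g h) :
    spanVec α β b ℓ f g h d = spanVec α β b ℓ f g h d' ↔
      reduceSpanCoeffs d = reduceSpanCoeffs d' := by
  have : Nontrivial (ZMod 4) := ZMod.nontrivial_iff.2 (by norm_num)
  rw [spanVec, spanVec, Prod.ext_iff,
    toFn_modByMonic_eq_iff (monic_X_pow_sub_one hα.ne') (degree_X_pow_sub_one hα),
    toFn_modByMonic_eq_iff (monic_X_pow_sub_one hβ.pos.ne') (degree_X_pow_sub_one hβ.pos),
    spanBin_sub, spanQuat_sub, ← map_sub, ← map_sub, ← map_sub, ← map_sub,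
    dvd_span_iff hα hβ hf hg hh hfac hb ((degree_red42_le _).trans_lt (ofFn_degree_lt _))
      (ofFn_degree_lt _) (ofFn_degree_lt _)]
  simp only [map_sub, red42_ofFn, sub_eq_zero, (injective_ofFn _).eq_iff, funext_iff,
    Function.comp_apply, reduceSpanCoeffs, Prod.ext_iff]

end Code
theorem spanning_set_and_card (α β : ℕ) (hα : 0 < α) (hβ : Odd β)
    (f g h : Polynomial (ZMod 4)) (hf : f.Monic) (hg : g.Monic) (hh : h.Monic)
    (hfac : f * h * g = X ^ β - 1)
    (b ℓ : Polynomial (ZMod 2)) (hb : b ∣ X ^ α - 1)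
    (hdvd : b ∣ red42 (h * g) * ℓ) :
    (∀ z : (Fin α → ZMod 2) × (Fin β → ZMod 4),
      memC b ℓ (f * h + 2 * f) z →
        ∃ (a : Fin (α - b.natDegree) → ZMod 4) (c : Fin g.natDegree → ZMod 4)
          (e : Fin h.natDegree → ZMod 4),
          (X ^ α - 1 : Polynomial (ZMod 2)) ∣
              polyOf2 z.1 -
                (red42 (∑ i, C (a i) * X ^ (i : ℕ)) * b +
                 red42 (∑ i, C (c i) * X ^ (i : ℕ)) * ℓ +
                 red42 (∑ i, C (e i) * X ^ (i : ℕ)) * (ℓ * red42 g)) ∧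
          (X ^ β - 1 : Polynomial (ZMod 4)) ∣
              polyOf4 z.2 -
                ((∑ i, C (c i) * X ^ (i : ℕ)) * (f * h + 2 * f) +
                 (∑ i, C (e i) * X ^ (i : ℕ)) * (2 * f * g))) ∧
    Nat.card {z : (Fin α → ZMod 2) × (Fin β → ZMod 4) //
        memC b ℓ (f * h + 2 * f) z} =
      2 ^ (α - b.natDegree) * 4 ^ g.natDegree * 2 ^ h.natDegree := by
  have hmem := memC_iff_mem_range_spanVec hα hβ.pos hg hh hfac hb hdvd
  refine ⟨fun z hz ↦ ?_, ?_⟩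
  · obtain ⟨d, rfl⟩ := (hmem z).1 hz
    simp only [polyOf2, polyOf4, sum_C_mul_X_pow_eq_ofFn]
    exact ⟨d.1, d.2.1, d.2.2, (eq_spanVec_iff hα hβ.pos _ d).1 rfl⟩
  · rw [Nat.card_congr (Equiv.subtypeEquivRight hmem),
      Nat.card_range_eq_of_fibers reduceSpanCoeffs_surjective
        (spanVec_eq_spanVec_iff hα hβ hf hg hh hfac hb)]
    simp [mul_assoc]
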